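/- arXiv:math/9811103 — 2 statements merged into one kernel-verified Lean document; each statement's English description precedes it below -/
import Mathlib

section
/- The map T : {0,1}^ℤ → {-1,0,1}^ℤ defined by (Tη)(i) = 1 - η(i) - η(i+1) intertwines the CA 184 dynamics C with the ballistic annihilation dynamics A, i.e. T(Cη) = A(Tη) for every η ∈ {0,1}^ℤ. -/
/-- CA 184 map. -/
def CA (η : ℤ → ℤ) : ℤ → ℤ := fun x =>
  if η x = 1 ∧ η (x+1) = 1 then 1
  else if η x = 0 ∧ η (x-1) = 1 then 1
  else 0

/-- Ballistic annihilation map. -/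
def BA (ζ : ℤ → ℤ) : ℤ → ℤ := fun x =>
  if ζ (x-1) = 1 ∧ ¬ (ζ x = -1) ∧ ¬ (ζ x = 0 ∧ ζ (x+1) = -1) then 1
  else if ζ (x+1) = -1 ∧ ¬ (ζ x = 1) ∧ ¬ (ζ x = 0 ∧ ζ (x-1) = 1) then -1
  else 0

/-- The map from CA 184 configurations to BA configurations. -/
def Tmap (η : ℤ → ℤ) : ℤ → ℤ := fun i => 1 - η i - η (i+1)

theorem T_intertwines (η : ℤ → ℤ) (hη : ∀ x, η x = 0 ∨ η x = 1) :
    Tmap (CA η) = BA (Tmap η) := by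
  funext x
  have e1 : x - 1 + 1 = x := by ring
  have e2 : x + 1 - 1 = x := by ring
  have e3 : x + 1 + 1 = x + 2 := by ring
  simp only [Tmap, CA, BA, e1, e2, e3]
  rcases hη (x-1) with h0 | h0 <;> rcases hη x with h1 | h1 <;>
    rcases hη (x+1) with h2 | h2 <;> rcases hη (x+2) with h3 | h3 <;>
    simp [h0, h1, h2, h3]
end

section
/- For the ballistic annihilation dynamics, any pair of subsequent diverging particles at time m is at distance at least 2m+1: if ζ_m = A^m ζ_0 and there exist sites x < y with ζ_m(x) = -1, ζ_m(y) = 1, and ζ_m(z) = 0 for all x < z < y, then y - x ≥ 2m + 1. -/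
lemma BA_range (ζ : ℤ → ℤ) (x : ℤ) : BA ζ x = -1 ∨ BA ζ x = 0 ∨ BA ζ x = 1 := by
  unfold BA; split_ifs <;> simp

lemma BA_iter_range (ζ₀ : ℤ → ℤ) (hζ : ∀ x, ζ₀ x = -1 ∨ ζ₀ x = 0 ∨ ζ₀ x = 1)
    (m : ℕ) (x : ℤ) : BA^[m] ζ₀ x = -1 ∨ BA^[m] ζ₀ x = 0 ∨ BA^[m] ζ₀ x = 1 := by
  induction m with
  | zero => exact hζ x
  | succ n ih => rw [Function.iterate_succ_apply']; exact BA_range _ x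

lemma BA_neg (ζ : ℤ → ℤ) (x : ℤ) (h : BA ζ x = -1) : ζ (x+1) = -1 := by
  unfold BA at h
  by_cases h1 : ζ (x-1) = 1 ∧ ¬ (ζ x = -1) ∧ ¬ (ζ x = 0 ∧ ζ (x+1) = -1)
  · rw [if_pos h1] at h; norm_num at h
  by_cases h2 : ζ (x+1) = -1 ∧ ¬ (ζ x = 1) ∧ ¬ (ζ x = 0 ∧ ζ (x-1) = 1)
  · exact h2.1
  rw [if_neg h1, if_neg h2] at h; norm_num at h

lemma BA_pos (ζ : ℤ → ℤ) (x : ℤ) (h : BA ζ x = 1) :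
    ζ (x-1) = 1 ∧ ζ x ≠ -1 := by
  unfold BA at h
  by_cases h1 : ζ (x-1) = 1 ∧ ¬ (ζ x = -1) ∧ ¬ (ζ x = 0 ∧ ζ (x+1) = -1)
  · exact ⟨h1.1, h1.2.1⟩
  by_cases h2 : ζ (x+1) = -1 ∧ ¬ (ζ x = 1) ∧ ¬ (ζ x = 0 ∧ ζ (x-1) = 1)
  · rw [if_neg h1, if_pos h2] at h; norm_num at h
  rw [if_neg h1, if_neg h2] at h; norm_num at h

lemma exists_min_int (a b : ℤ) (P : ℤ → Prop) [DecidablePred P]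
    (h : ∃ z, a ≤ z ∧ z ≤ b ∧ P z) :
    ∃ w, a ≤ w ∧ w ≤ b ∧ P w ∧ ∀ z, a ≤ z → z < w → ¬ P z := by
  obtain ⟨z₀, hz₀⟩ := h
  set S := (Finset.Icc a b).filter P with hS
  have hne : S.Nonempty :=
    ⟨z₀, Finset.mem_filter.2 ⟨Finset.mem_Icc.2 ⟨hz₀.1, hz₀.2.1⟩, hz₀.2.2⟩⟩
  refine ⟨S.min' hne, ?_, ?_, ?_, ?_⟩
  · exact (Finset.mem_Icc.1 (Finset.mem_filter.1 (S.min'_mem hne)).1).1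
  · exact (Finset.mem_Icc.1 (Finset.mem_filter.1 (S.min'_mem hne)).1).2
  · exact (Finset.mem_filter.1 (S.min'_mem hne)).2
  · intro z hz1 hz2 hP
    have hzb : z ≤ b :=
      le_trans hz2.le (Finset.mem_Icc.1 (Finset.mem_filter.1 (S.min'_mem hne)).1).2
    have : S.min' hne ≤ z :=
      S.min'_le z (Finset.mem_filter.2 ⟨Finset.mem_Icc.2 ⟨hz1, hzb⟩, hP⟩)
    omega

lemma exists_max_int (a b : ℤ) (P : ℤ → Prop) [DecidablePred P]
    (h : ∃ z, a ≤ z ∧ z ≤ b ∧ P z) :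
    ∃ w, a ≤ w ∧ w ≤ b ∧ P w ∧ ∀ z, w < z → z ≤ b → ¬ P z := by
  obtain ⟨w, h1, h2, h3, h4⟩ := exists_min_int (-b) (-a) (fun z => P (-z))
    ⟨-(h.choose), by have := h.choose_spec; refine ⟨by omega, by omega, by simpa using this.2.2⟩⟩
  refine ⟨-w, by omega, by omega, by simpa using h3, ?_⟩
  intro z hz1 hz2 hP
  exact h4 (-z) (by omega) (by omega) (by simpa using hP)

theorem ba_diverging_distance (ζ₀ : ℤ → ℤ) (hζ : ∀ x, ζ₀ x = -1 ∨ ζ₀ x = 0 ∨ ζ₀ x = 1)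
    (m : ℕ) (x y : ℤ) (hxy : x < y)
    (hx : BA^[m] ζ₀ x = -1) (hy : BA^[m] ζ₀ y = 1)
    (hmid : ∀ z, x < z → z < y → BA^[m] ζ₀ z = 0) :
    y - x ≥ 2 * (m : ℤ) + 1 := by
  classical
  induction m generalizing x y with
  | zero => simp only [Nat.cast_zero]; omega
  | succ n ih =>
    set ζ := BA^[n] ζ₀ with hζdef
    rw [Function.iterate_succ_apply'] at hx hy
    have hx1 : ζ (x+1) = -1 := BA_neg _ _ hx
    have hy1 : ζ (y-1) = 1 ∧ ζ y ≠ -1 := BA_pos _ _ hy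
    have hne1 : y - x ≠ 1 := by
      intro h
      apply hy1.2
      rw [show y = x + 1 by omega]
      exact hx1
    have hne2 : y - x ≠ 2 := by
      intro h
      have : x + 1 = y - 1 := by omega
      rw [this, hy1.1] at hx1
      norm_num at hx1
    have h3 : y - x ≥ 3 := by omega
    obtain ⟨y', hy'1, hy'2, hy'3, hy'4⟩ := exists_min_int (x+2) (y-1) (fun z => ζ z = 1)
      ⟨y-1, by omega, le_refl _, hy1.1⟩
    obtain ⟨x', hx'1, hx'2, hx'3, hx'4⟩ := exists_max_int (x+1) (y'-1) (fun z => ζ z = -1)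
      ⟨x+1, le_refl _, by omega, hx1⟩
    have hmid' : ∀ z, x' < z → z < y' → ζ z = 0 := by
      intro z hz1 hz2
      rcases BA_iter_range ζ₀ hζ n z with h | h | h
      · exact absurd h (hx'4 z hz1 (by omega))
      · exact h
      · exact absurd h (hy'4 z (by omega) hz2)
    have := ih x' y' (by omega) hx'3 hy'3 hmid'
    push_cast
    omega
end
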